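/- arXiv:1908.05921 — 7 statements merged into one kernel-verified Lean document; each statement's English description precedes it below -/
import Mathlib

section
/- The sum-essential graph of a module is connected with diameter at most 3: for any two nontrivial submodules L ≠ K of M, there is a path of length at most 3 between them in the sum-essential graph. -/
variable {R : Type*} [Ring R] {M : Type*} [AddCommGroup M] [Module R M]

/-- `N` is an essential submodule of `M`: it intersects every nonzero submodule nontrivially. -/
def IsEssentialSubmodule (N : Submodule R M) : Prop :=
  ∀ B : Submodule R M, B ≠ ⊥ → N ⊓ B ≠ ⊥

/-- A vertex of the sum-essential graph `S(M)`: a nontrivial submodule. -/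
def IsVertexS (N : Submodule R M) : Prop := N ≠ ⊥ ∧ N ≠ ⊤

/-- Adjacency in the sum-essential graph `S(M)`. -/
def AdjS (A B : Submodule R M) : Prop :=
  IsVertexS A ∧ IsVertexS B ∧ A ≠ B ∧ IsEssentialSubmodule (A ⊔ B)

/-- A vertex of the proper sum-essential graph `N(M)`: a nontrivial non-essential submodule. -/
def IsVertexP (N : Submodule R M) : Prop :=
  N ≠ ⊥ ∧ N ≠ ⊤ ∧ ¬ IsEssentialSubmodule N

/-- Adjacency in the proper sum-essential graph `N(M)`. -/
def AdjP (A B : Submodule R M) : Prop :=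
  IsVertexP A ∧ IsVertexP B ∧ A ≠ B ∧ IsEssentialSubmodule (A ⊔ B)

/-- `U` is a uniform submodule: nonzero, and any two nonzero submodules of it intersect. -/
def UniformSubmodule (U : Submodule R M) : Prop :=
  U ≠ ⊥ ∧ ∀ A B : Submodule R M, A ≤ U → B ≤ U → A ≠ ⊥ → B ≠ ⊥ → A ⊓ B ≠ ⊥

/-- `C` is a complement of `U` in `M`: maximal with respect to `U ⊓ C = ⊥`. -/
def IsComplementOf (C U : Submodule R M) : Prop :=
  U ⊓ C = ⊥ ∧ ∀ D : Submodule R M, U ⊓ D = ⊥ → C ≤ D → D = C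

/-!
If `L + K` is not essential, choose `C` maximal with `(L + K) ∩ C = 0`; then `C ≠ 0` and
`L + K + C` is essential, so `L — K + C — L + C — K` is a path. If `K + C = M`, a maximal
complement of `L` containing `C` is a common neighbour of `L` and `K` instead (symmetrically
if `L + C = M`).
-/

lemma isEssentialSubmodule_top : IsEssentialSubmodule (⊤ : Submodule R M) := by
  intro B hB
  rwa [top_inf_eq]

lemma IsEssentialSubmodule.mono {N N' : Submodule R M} (hN : IsEssentialSubmodule N)
    (hle : N ≤ N') : IsEssentialSubmodule N' :=
  fun B hB => ne_bot_of_le_ne_bot (hN B hB) (inf_le_inf_right B hle)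

lemma IsComplementOf.exists_ge {U C₀ : Submodule R M} (h : U ⊓ C₀ = ⊥) :
    ∃ C, C₀ ≤ C ∧ IsComplementOf C U := by
  obtain ⟨C, hC₀, hCU, hCmax⟩ := zorn_le_nonempty₀ {C : Submodule R M | U ⊓ C = ⊥}
    (fun c hcU hc _ _ => ⟨sSup c, by
      rw [Set.mem_ofPred_eq, hc.directedOn.inf_sSup_eq, iSup₂_eq_bot]
      exact fun s hs => hcU hs, fun _ => le_sSup⟩) C₀ h
  exact ⟨C, hC₀, hCU, fun D hD hCD => le_antisymm (hCmax hD hCD) hCD⟩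

lemma IsComplementOf.isEssentialSubmodule_sup {C U : Submodule R M} (h : IsComplementOf C U) :
    IsEssentialSubmodule (U ⊔ C) := by
  intro B hB hUCB
  -- modular law: `U ⊓ (C ⊔ B) ≤ (C ⊔ B) ⊓ (U ⊔ C) = C ⊔ B ⊓ (U ⊔ C) = C`
  have hdisj : U ⊓ (C ⊔ B) = ⊥ := by
    refine eq_bot_iff.mpr (le_trans ?_ h.1.le)
    calc U ⊓ (C ⊔ B) ≤ U ⊓ ((C ⊔ B) ⊓ (U ⊔ C)) :=
          le_inf inf_le_left (le_inf inf_le_right (inf_le_left.trans le_sup_left))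
      _ = U ⊓ C := by rw [sup_inf_assoc_of_le B le_sup_right, inf_comm B, hUCB, sup_bot_eq]
  have hBC : B ≤ C := le_sup_right.trans (h.2 _ hdisj le_sup_left).le
  exact hB (by rwa [inf_eq_right.mpr (hBC.trans le_sup_right)] at hUCB)

lemma IsComplementOf.isVertexS {C U : Submodule R M} (h : IsComplementOf C U) (hU : U ≠ ⊥)
    (hC : C ≠ ⊥) : IsVertexS C :=
  ⟨hC, fun hCtop => hU (by simpa [hCtop] using h.1)⟩

lemma exists_isVertexS_ge_isEssentialSubmodule_sup {L C : Submodule R M} (hL : L ≠ ⊥)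
    (hC : C ≠ ⊥) (hLC : L ⊓ C = ⊥) :
    ∃ Z, IsVertexS Z ∧ C ≤ Z ∧ IsEssentialSubmodule (L ⊔ Z) := by
  obtain ⟨Z, hCZ, hZ⟩ := IsComplementOf.exists_ge hLC
  exact ⟨Z, hZ.isVertexS hL (ne_bot_of_le_ne_bot hC hCZ), hCZ, hZ.isEssentialSubmodule_sup⟩

def SumEssentialDistLeThree (L K : Submodule R M) : Prop :=
  AdjS L K ∨ (∃ X : Submodule R M, AdjS L X ∧ AdjS X K) ∨
    ∃ X Y : Submodule R M, AdjS L X ∧ AdjS X Y ∧ AdjS Y K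

lemma sumEssentialDistLeThree_of_chain₂ {L X K : Submodule R M} (hL : IsVertexS L)
    (hX : IsVertexS X) (hK : IsVertexS K) (hLK : L ≠ K) (hLX : IsEssentialSubmodule (L ⊔ X))
    (hXK : IsEssentialSubmodule (X ⊔ K)) : SumEssentialDistLeThree L K := by
  by_cases hLK_ess : IsEssentialSubmodule (L ⊔ K)
  · exact Or.inl ⟨hL, hK, hLK, hLK_ess⟩
  refine Or.inr (Or.inl ⟨X, ⟨hL, hX, ?_, hLX⟩, ⟨hX, hK, ?_, hXK⟩⟩)
  · rintro rfl
    exact hLK_ess hXK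
  · rintro rfl
    exact hLK_ess hLX

lemma sumEssentialDistLeThree_of_chain₃ {L X Y K : Submodule R M} (hL : IsVertexS L)
    (hX : IsVertexS X) (hY : IsVertexS Y) (hK : IsVertexS K) (hLK : L ≠ K)
    (hLX : IsEssentialSubmodule (L ⊔ X)) (hXY : IsEssentialSubmodule (X ⊔ Y))
    (hYK : IsEssentialSubmodule (Y ⊔ K)) : SumEssentialDistLeThree L K := by
  by_cases hLX_eq : L = X
  · subst hLX_eq
    exact sumEssentialDistLeThree_of_chain₂ hL hY hK hLK hXY hYK
  by_cases hYK_eq : Y = K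
  · subst hYK_eq
    exact sumEssentialDistLeThree_of_chain₂ hL hX hY hLK hLX hXY
  by_cases hXY_eq : X = Y
  · subst hXY_eq
    exact sumEssentialDistLeThree_of_chain₂ hL hX hK hLK hLX hYK
  exact Or.inr (Or.inr ⟨X, Y, ⟨hL, hX, hLX_eq, hLX⟩, ⟨hX, hY, hXY_eq, hXY⟩,
    ⟨hY, hK, hYK_eq, hYK⟩⟩)

/-- The sum-essential graph `S(M)` is connected of diameter at most 3. -/
theorem stmt1 (L K : Submodule R M) (hL : IsVertexS L) (hK : IsVertexS K)
    (hLK : L ≠ K) :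
    AdjS L K ∨ (∃ X : Submodule R M, AdjS L X ∧ AdjS X K) ∨
      ∃ X Y : Submodule R M, AdjS L X ∧ AdjS X Y ∧ AdjS Y K := by
  by_cases hLK_ess : IsEssentialSubmodule (L ⊔ K)
  · exact Or.inl ⟨hL, hK, hLK, hLK_ess⟩
  obtain ⟨B, hB, hLKB⟩ : ∃ B, B ≠ ⊥ ∧ (L ⊔ K) ⊓ B = ⊥ := by
    simpa [IsEssentialSubmodule] using hLK_ess
  obtain ⟨C, hBC, hC⟩ := IsComplementOf.exists_ge hLKB
  have hC_ne : C ≠ ⊥ := ne_bot_of_le_ne_bot hB hBC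
  have hLC : L ⊓ C = ⊥ := eq_bot_iff.mpr ((inf_le_inf_right C le_sup_left).trans hC.1.le)
  have hKC : K ⊓ C = ⊥ := eq_bot_iff.mpr ((inf_le_inf_right C le_sup_right).trans hC.1.le)
  by_cases hKC_top : K ⊔ C = ⊤
  · obtain ⟨Z, hZ, hCZ, hLZ⟩ := exists_isVertexS_ge_isEssentialSubmodule_sup hL.1 hC_ne hLC
    exact sumEssentialDistLeThree_of_chain₂ hL hZ hK hLK hLZ
      (isEssentialSubmodule_top.mono (hKC_top ▸ sup_comm Z K ▸ sup_le_sup_left hCZ K))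
  by_cases hLC_top : L ⊔ C = ⊤
  · obtain ⟨Z, hZ, hCZ, hKZ⟩ := exists_isVertexS_ge_isEssentialSubmodule_sup hK.1 hC_ne hKC
    exact sumEssentialDistLeThree_of_chain₂ hL hZ hK hLK
      (isEssentialSubmodule_top.mono (hLC_top ▸ sup_le_sup_left hCZ L)) (sup_comm K Z ▸ hKZ)
  have hLKC : IsEssentialSubmodule (L ⊔ K ⊔ C) := hC.isEssentialSubmodule_sup
  exact sumEssentialDistLeThree_of_chain₃ hL
    ⟨ne_bot_of_le_ne_bot hK.1 le_sup_left, hKC_top⟩ ⟨ne_bot_of_le_ne_bot hL.1 le_sup_left, hLC_top⟩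
    hK hLK (by rwa [← sup_assoc]) (by rwa [sup_sup_sup_comm, sup_idem, sup_comm K L])
    (by rwa [sup_right_comm])
end

section
/- The proper sum-essential graph of a module is connected with diameter at most 3: for any two distinct nontrivial non-essential submodules L, K of M, there is a path of length at most 3 between them in the proper sum-essential graph (all intermediate vertices being non-essential submodules). -/
/-!
A complement `C ≠ 0` of a nonzero submodule `N` is itself a vertex of `N(M)`, and since `N ⊔ C`
is essential, `C` is adjacent to every vertex containing `N`. If `L ⊓ K ≠ 0`, a complement of
`L ⊓ K` (nonzero because `L ⊓ K` is not essential) is a common neighbour of `L` and `K`. If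
`L ⊓ K = 0`, take a complement `C ⊇ K` of `L` and a complement `D ⊇ L` of `K`; then
`L — C — D — K` is a path.
-/

variable {R : Type*} [Ring R] {M : Type*} [AddCommGroup M] [Module R M]

namespace IsEssentialSubmodule

theorem mono_s2 {A B : Submodule R M} (hA : IsEssentialSubmodule A) (hAB : A ≤ B) :
    IsEssentialSubmodule B :=
  fun C hC hBC => hA C hC (le_bot_iff.mp (hBC ▸ inf_le_inf_right C hAB))

end IsEssentialSubmodule

theorem AdjP.symm {A B : Submodule R M} (h : AdjP A B) : AdjP B A :=
  ⟨h.2.1, h.1, h.2.2.1.symm, by rw [sup_comm]; exact h.2.2.2⟩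

theorem exists_isComplementOf_ge {A B : Submodule R M} (h : A ⊓ B = ⊥) :
    ∃ C : Submodule R M, B ≤ C ∧ IsComplementOf C A := by
  have hchain : ∀ c ⊆ {C : Submodule R M | Disjoint A C}, IsChain (· ≤ ·) c →
      ∀ D ∈ c, ∃ ub ∈ {C : Submodule R M | Disjoint A C}, ∀ E ∈ c, E ≤ ub :=
    fun c hc hc_chain _ _ => ⟨sSup c,
      hc_chain.directedOn.disjoint_sSup_right.mpr fun _ hE => hc hE, fun _ => le_sSup⟩
  obtain ⟨C, hBC, hC⟩ := zorn_le_nonempty₀ _ hchain B (disjoint_iff.mpr h)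
  exact ⟨C, hBC, disjoint_iff.mp hC.prop,
    fun D hD hCD => (hC.le_of_ge (disjoint_iff.mpr hD) hCD).antisymm hCD⟩

namespace IsComplementOf

variable {C N : Submodule R M}

/-- If `(N ⊔ C) ⊓ B = ⊥`, modularity gives `N ⊓ (C ⊔ B) = ⊥`, so `C ⊔ B = C` by maximality
and `B ≤ (N ⊔ C) ⊓ B = ⊥`. -/
theorem isEssentialSubmodule_sup_s2 (hC : IsComplementOf C N) : IsEssentialSubmodule (N ⊔ C) := by
  intro B hB hNCB
  have hdisj : Disjoint N (C ⊔ B) :=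
    (disjoint_iff.mpr hC.1).disjoint_sup_right_of_disjoint_sup_left (disjoint_iff.mpr hNCB)
  have hBC : B ≤ C := hC.2 (C ⊔ B) (disjoint_iff.mp hdisj) le_sup_left ▸ le_sup_right
  exact hB (le_bot_iff.mp (hNCB ▸ le_inf (hBC.trans le_sup_right) le_rfl))

theorem isVertexP (hC : IsComplementOf C N) (hN : N ≠ ⊥) (hC₀ : C ≠ ⊥) : IsVertexP C :=
  ⟨hC₀, fun hC_top => hN (by simpa [hC_top] using hC.1),
    fun hC_ess => hC_ess N hN (by rw [inf_comm]; exact hC.1)⟩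

theorem adjP_of_le (hC : IsComplementOf C N) (hN : N ≠ ⊥) (hC₀ : C ≠ ⊥)
    {X : Submodule R M} (hX : IsVertexP X) (hNX : N ≤ X) : AdjP X C := by
  refine ⟨hX, hC.isVertexP hN hC₀, ?_, hC.isEssentialSubmodule_sup_s2.mono_s2 (sup_le_sup_right hNX C)⟩
  rintro rfl
  exact hN (le_bot_iff.mp (hC.1 ▸ le_inf le_rfl hNX))

end IsComplementOf

theorem exists_adjP_adjP_of_inf_ne_bot {L K : Submodule R M} (hL : IsVertexP L)
    (hK : IsVertexP K) (hLK : L ⊓ K ≠ ⊥) : ∃ X : Submodule R M, AdjP L X ∧ AdjP X K := by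
  have hLK_ess : ¬ IsEssentialSubmodule (L ⊓ K) := fun h => hL.2.2 (h.mono_s2 inf_le_left)
  obtain ⟨B, hB, hLKB⟩ : ∃ B : Submodule R M, B ≠ ⊥ ∧ L ⊓ K ⊓ B = ⊥ := by
    simpa [IsEssentialSubmodule] using hLK_ess
  obtain ⟨C, hBC, hC⟩ := exists_isComplementOf_ge hLKB
  have hC₀ : C ≠ ⊥ := fun h => hB (le_bot_iff.mp (h ▸ hBC))
  exact ⟨C, hC.adjP_of_le hLK hC₀ hL inf_le_left, (hC.adjP_of_le hLK hC₀ hK inf_le_right).symm⟩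

theorem exists_adjP_adjP_adjP_of_inf_eq_bot {L K : Submodule R M} (hL : IsVertexP L)
    (hK : IsVertexP K) (hLK : L ⊓ K = ⊥) :
    ∃ X Y : Submodule R M, AdjP L X ∧ AdjP X Y ∧ AdjP Y K := by
  obtain ⟨C, hKC, hC⟩ := exists_isComplementOf_ge hLK
  obtain ⟨D, hLD, hD⟩ := exists_isComplementOf_ge (inf_comm L K ▸ hLK)
  have hC₀ : C ≠ ⊥ := fun h => hK.1 (le_bot_iff.mp (h ▸ hKC))
  have hD₀ : D ≠ ⊥ := fun h => hL.1 (le_bot_iff.mp (h ▸ hLD))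
  exact ⟨C, D, hC.adjP_of_le hL.1 hC₀ hL le_rfl,
    (hC.adjP_of_le hL.1 hC₀ (hD.isVertexP hK.1 hD₀) hLD).symm,
    (hD.adjP_of_le hK.1 hD₀ hK le_rfl).symm⟩

/-- The proper sum-essential graph `N(M)` is connected of diameter
at most 3 (all intermediate vertices being nontrivial non-essential submodules). -/
theorem stmt2 (L K : Submodule R M) (hL : IsVertexP L) (hK : IsVertexP K)
    (hLK : L ≠ K) :
    AdjP L K ∨ (∃ X : Submodule R M, AdjP L X ∧ AdjP X K) ∨
      ∃ X Y : Submodule R M, AdjP L X ∧ AdjP X Y ∧ AdjP Y K := by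
  by_cases hsum : IsEssentialSubmodule (L ⊔ K)
  · exact Or.inl ⟨hL, hK, hLK, hsum⟩
  by_cases hint : L ⊓ K = ⊥
  · exact Or.inr (Or.inr (exists_adjP_adjP_adjP_of_inf_eq_bot hL hK hint))
  · exact Or.inr (Or.inl (exists_adjP_adjP_of_inf_ne_bot hL hK hint))
end

section
/- If M is a direct sum of n ≥ 2 pairwise non-isomorphic simple R-modules indexed by a set T, then every submodule of M is of the form ⊕_{i∈S} B_i for a subset S ⊆ T, and the degree of the vertex A = ⊕_{i∈S} B_i (for S a nonempty proper subset of T) in the sum-essential graph S(M) equals 2^{|S|} − 1. -/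
variable {R : Type*} [Ring R] {M : Type*} [AddCommGroup M] [Module R M]

/-! In a semisimple module the only essential submodule is `M` itself, so two submodules are
adjacent in `S(M)` exactly when they sum to `M`. When the simple summands `B i` are pairwise
non-isomorphic, every simple submodule `C` is one of them: if `C ≅ B i` but `C ≠ B i`, then by
modularity `C ⊔ B i` meets `⨆ j ≠ i, B j`, and a simple submodule of that meet is isomorphic
both to `B i` and to some `B j` with `j ≠ i`. Hence the submodules are exactly the
`⨆ i ∈ S, B i`, and `S ↦ ⨆ i ∈ S, B i` is injective, so the neighbours of the vertex indexed
by `S` correspond to the proper subsets of `T` containing `Sᶜ`, of which there are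
`2 ^ |S| - 1`. -/

open Set

theorem Set.ncard_setOf_compl_subset_ne_univ {α : Type*} [Finite α] (S : Set α) :
    {S' | Sᶜ ⊆ S' ∧ S' ≠ univ}.ncard = 2 ^ S.ncard - 1 := by
  have h : {S' | Sᶜ ⊆ S' ∧ S' ≠ univ} = compl '' (𝒫 S \ {∅}) := by
    ext S'
    rw [← compl_compl S', compl_injective.mem_set_image]
    simp [compl_subset_comm]
  rw [h, ncard_image_of_injective _ compl_injective,
    ncard_sdiff_singleton_of_mem (mem_powerset (empty_subset S)), ncard_powerset]

section IndependentFamily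

variable {ι α : Type*} [CompleteLattice α] {t : ι → α}

theorem biSup_eq_bot_iff_of_ne_bot (ht : ∀ i, t i ≠ ⊥) {S : Set ι} :
    ⨆ i ∈ S, t i = ⊥ ↔ S = ∅ := by
  simp [ht, eq_empty_iff_forall_notMem]

theorem iSupIndep.le_biSup_iff (hind : iSupIndep t) (ht : ∀ i, t i ≠ ⊥) {S : Set ι} {i : ι} :
    t i ≤ ⨆ j ∈ S, t j ↔ i ∈ S :=
  ⟨fun h => by_contra fun hi => ht i ((hind.disjoint_biSup hi).eq_bot_of_le h),
    fun hi => le_biSup t hi⟩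

theorem iSupIndep.injective_biSup (hind : iSupIndep t) (ht : ∀ i, t i ≠ ⊥) :
    Function.Injective fun S : Set ι => ⨆ i ∈ S, t i := by
  intro S S' (h : ⨆ i ∈ S, t i = ⨆ i ∈ S', t i)
  ext i
  rw [← hind.le_biSup_iff ht, ← hind.le_biSup_iff ht (S := S'), h]

theorem iSupIndep.biSup_eq_top_iff (hind : iSupIndep t) (ht : ∀ i, t i ≠ ⊥)
    (htop : ⨆ i, t i = ⊤) {S : Set ι} : ⨆ i ∈ S, t i = ⊤ ↔ S = univ := by
  rw [← htop, ← iSup_univ (f := t)]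
  exact (hind.injective_biSup ht).eq_iff

end IndependentFamily

theorem isEssentialSubmodule_iff_eq_top [IsSemisimpleModule R M] {N : Submodule R M} :
    IsEssentialSubmodule N ↔ N = ⊤ := by
  refine ⟨fun hN => ?_, fun hN C hC => by simpa [hN] using hC⟩
  obtain ⟨C, hC⟩ := exists_isCompl N
  have hC0 : C = ⊥ := by_contra fun hC0 => hN C hC0 hC.inf_eq_bot
  simpa [hC0] using hC.sup_eq_top

theorem IsSemisimpleModule.of_iSup_eq_top_of_isAtom {ι : Type*} {B : ι → Submodule R M}
    (hatom : ∀ i, IsAtom (B i)) (htop : ⨆ i, B i = ⊤) : IsSemisimpleModule R M :=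
  isSemisimpleModule_of_isSemisimpleModule_submodule'
    (fun i => have := isSimpleModule_iff_isAtom.mpr (hatom i); inferInstance) htop

theorem Submodule.exists_linearEquiv_of_le_sSup_of_isAtom {s : Set (Submodule R M)}
    (hs : ∀ m ∈ s, IsAtom m) (N : Submodule R M) [IsSimpleModule R N] (hN : N ≤ sSup s) :
    ∃ m ∈ s, Nonempty (N ≃ₗ[R] m) :=
  have : ∀ m : s, IsSimpleModule R m := fun m => isSimpleModule_iff_isAtom.mpr (hs m m.2)
  N.linearEquiv_of_le_sSup s hN

theorem Submodule.exists_linearEquiv_of_le_biSup_of_isAtom {ι : Type*} {B : ι → Submodule R M}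
    (hatom : ∀ i, IsAtom (B i)) {S : Set ι} (N : Submodule R M) [IsSimpleModule R N]
    (hN : N ≤ ⨆ i ∈ S, B i) : ∃ i ∈ S, Nonempty (N ≃ₗ[R] B i) := by
  rw [← sSup_image] at hN
  obtain ⟨_, ⟨i, hi, rfl⟩, e⟩ :=
    exists_linearEquiv_of_le_sSup_of_isAtom (by simpa using fun i _ => hatom i) N hN
  exact ⟨i, hi, e⟩

theorem Submodule.exists_eq_of_isAtom_of_iSup_eq_top {ι : Type*} {B : ι → Submodule R M}
    (hatom : ∀ i, IsAtom (B i)) (htop : ⨆ i, B i = ⊤)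
    (hnoniso : ∀ i j, i ≠ j → IsEmpty (B i ≃ₗ[R] B j)) {C : Submodule R M} (hC : IsAtom C) :
    ∃ i, C = B i := by
  have := IsSemisimpleModule.of_iSup_eq_top_of_isAtom hatom htop
  have := isSimpleModule_iff_isAtom.mpr hC
  obtain ⟨i, -, ⟨eC⟩⟩ := C.exists_linearEquiv_of_le_biSup_of_isAtom hatom (S := univ)
    (by simp [htop])
  refine ⟨i, by_contra fun hne => ?_⟩
  set D := ⨆ j ∈ ({i}ᶜ : Set ι), B j
  have hBD : B i ⊔ D = ⊤ := by
    rw [← htop, ← iSup_univ (f := B), ← union_compl_self {i}, iSup_union, iSup_singleton]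
  have hmeet : (C ⊔ B i) ⊓ D ≠ ⊥ := fun h => hne <| ((hatom i).le_iff_eq hC.1).mp <|
    calc C ≤ (B i ⊔ D) ⊓ (C ⊔ B i) := by simp [hBD]
      _ = B i := by rw [sup_inf_assoc_of_le D le_sup_right, inf_comm, h, sup_bot_eq]
  obtain ⟨E, hE, _⟩ := (IsSemisimpleModule.eq_bot_or_exists_simple_le _).resolve_left hmeet
  obtain ⟨j, hj, ⟨eEj⟩⟩ := E.exists_linearEquiv_of_le_biSup_of_isAtom hatom (hE.trans inf_le_right)
  have eEi : Nonempty (E ≃ₗ[R] B i) := by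
    obtain ⟨m, hm | hm, ⟨e⟩⟩ := E.exists_linearEquiv_of_le_sSup_of_isAtom
      (s := {C, B i}) (by simp [hC, hatom i]) (by simpa using hE.trans inf_le_left)
    · subst hm; exact ⟨e.trans eC⟩
    · subst hm; exact ⟨e⟩
  exact (hnoniso j i hj).false (eEj.symm.trans eEi.some)

theorem Submodule.eq_biSup_setOf_le_of_iSup_eq_top {ι : Type*} {B : ι → Submodule R M}
    (hatom : ∀ i, IsAtom (B i)) (htop : ⨆ i, B i = ⊤)
    (hnoniso : ∀ i j, i ≠ j → IsEmpty (B i ≃ₗ[R] B j)) (N : Submodule R M) :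
    N = ⨆ i ∈ {i | B i ≤ N}, B i := by
  have := IsSemisimpleModule.of_iSup_eq_top_of_isAtom hatom htop
  refine le_antisymm ?_ (iSup₂_le fun i hi => hi)
  conv_lhs => rw [← sSup_atoms_le_eq N]
  refine sSup_le ?_
  rintro _ ⟨hC, hCN⟩
  obtain ⟨i, rfl⟩ := exists_eq_of_isAtom_of_iSup_eq_top hatom htop hnoniso hC
  exact le_biSup B hCN

theorem iSupIndep.adjS_biSup_iff {ι : Type*} {B : ι → Submodule R M} (hind : iSupIndep B)
    (hatom : ∀ i, IsAtom (B i)) (htop : ⨆ i, B i = ⊤) {S S' : Set ι} (hS : S.Nonempty)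
    (hSu : S ≠ univ) :
    AdjS (⨆ i ∈ S, B i) (⨆ i ∈ S', B i) ↔ Sᶜ ⊆ S' ∧ S' ≠ univ := by
  have := IsSemisimpleModule.of_iSup_eq_top_of_isAtom hatom htop
  have hne : ∀ i, B i ≠ ⊥ := fun i => (hatom i).1
  simp only [AdjS, IsVertexS, ne_eq, isEssentialSubmodule_iff_eq_top, ← iSup_union,
    biSup_eq_bot_iff_of_ne_bot hne, hind.biSup_eq_top_iff hne htop,
    (hind.injective_biSup hne).eq_iff, ← compl_subset_iff_union]
  refine ⟨fun ⟨_, ⟨_, hS'u⟩, _, hSS'⟩ => ⟨hSS', hS'u⟩, fun ⟨hSS', hS'u⟩ => ?_⟩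
  refine ⟨⟨hS.ne_empty, hSu⟩, ⟨?_, hS'u⟩, ?_, hSS'⟩
  · rintro rfl
    exact hSu (by simpa using hSS')
  · rintro rfl
    exact hSu (by simpa using hSS')

theorem stmt3_general {T : Type*} [Fintype T] (B : T → Submodule R M)
    (hatom : ∀ i, IsAtom (B i))
    (hindep : ∀ i, Disjoint (B i) (⨆ j ∈ ({i}ᶜ : Set T), B j))
    (hsum : (⨆ i, B i) = ⊤)
    (hnoniso : ∀ i j, i ≠ j → IsEmpty (↥(B i) ≃ₗ[R] ↥(B j))) :
    (∀ N : Submodule R M, ∃ S : Set T, N = ⨆ i ∈ S, B i) ∧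
    (∀ S : Set T, S.Nonempty → S ≠ Set.univ →
      {C : Submodule R M | AdjS (⨆ i ∈ S, B i) C}.ncard = 2 ^ S.ncard - 1) := by
  have hind : iSupIndep B := fun i => by simpa only [mem_compl_singleton_iff] using hindep i
  have hrepr (N : Submodule R M) : ∃ S : Set T, N = ⨆ i ∈ S, B i :=
    ⟨_, Submodule.eq_biSup_setOf_le_of_iSup_eq_top hatom hsum hnoniso N⟩
  have hinj := hind.injective_biSup fun i => (hatom i).1
  refine ⟨hrepr, fun S hS hSu => ?_⟩
  have hnbrs : {C : Submodule R M | AdjS (⨆ i ∈ S, B i) C} =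
      (fun S' => ⨆ i ∈ S', B i) '' {S' | Sᶜ ⊆ S' ∧ S' ≠ univ} := by
    ext C
    obtain ⟨S', rfl⟩ := hrepr C
    rw [hinj.mem_set_image]
    exact hind.adjS_biSup_iff hatom hsum hS hSu
  rw [hnbrs, ncard_image_of_injective _ hinj, ncard_setOf_compl_subset_ne_univ]

/-- If `M` is an internal direct sum of `n ≥ 2` pairwise non-isomorphic
simple submodules `B i`, then every submodule of `M` is `⨆ i ∈ S, B i` for some
`S ⊆ T`, and for `S` nonempty proper the vertex `⨆ i ∈ S, B i` has degree
`2 ^ |S| − 1` in the sum-essential graph. -/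
theorem stmt3 {T : Type*} [Fintype T] (B : T → Submodule R M)
    (hcard : 2 ≤ Fintype.card T)
    (hatom : ∀ i, IsAtom (B i))
    (hindep : ∀ i, Disjoint (B i) (⨆ j ∈ ({i}ᶜ : Set T), B j))
    (hsum : (⨆ i, B i) = ⊤)
    (hnoniso : ∀ i j, i ≠ j → IsEmpty (↥(B i) ≃ₗ[R] ↥(B j))) :
    (∀ N : Submodule R M, ∃ S : Set T, N = ⨆ i ∈ S, B i) ∧
    (∀ S : Set T, S.Nonempty → S ≠ Set.univ →
      {C : Submodule R M | AdjS (⨆ i ∈ S, B i) C}.ncard = 2 ^ S.ncard - 1) :=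
  stmt3_general B hatom hindep hsum hnoniso
end

section
/- For a left R-module M, every vertex of the proper sum-essential graph N(M) has finite degree if and only if N(M) has only finitely many vertices (i.e., M has only finitely many nontrivial non-essential submodules). -/
/-!
Fix a vertex `A` and let `C` be maximal among the submodules meeting `A` trivially; then `A + C`
is essential, so `C` is adjacent to every vertex containing `A`. A vertex `K` is either `A`, a
neighbour of `A`, or contained in the vertex `A + K`; and a vertex `K` inside a vertex `P` is at
distance at most two from `P`, through a maximal extension, avoiding `K`, of a complement of `P`.
So every vertex lies within distance four of `A`, and balls of a locally finite graph are finite.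
-/

variable {R : Type*} [Ring R] {M : Type*} [AddCommGroup M] [Module R M]

theorem Relation.finite_setOf_comp {α β γ : Type*} {r : α → β → Prop} {p : β → γ → Prop}
    (hr : ∀ a, {b | r a b}.Finite) (hp : ∀ b, {c | p b c}.Finite) (a : α) :
    {c | Relation.Comp r p a c}.Finite :=
  ((hr a).biUnion fun b _ => hp b).subset fun _ ⟨_, hab, hbc⟩ => Set.mem_biUnion hab hbc

theorem Disjoint.exists_le_disjoint_forall_disjoint_sup {α : Type*} [CompleteLattice α]
    [IsModularLattice α] [IsCompactlyGenerated α] {a b : α} (hab : Disjoint a b) :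
    ∃ c, b ≤ c ∧ Disjoint a c ∧ ∀ x, Disjoint (a ⊔ c) x → x = ⊥ := by
  obtain ⟨c, hbc, hac, hmax⟩ := zorn_le_nonempty₀ {c | Disjoint a c}
    (fun s hs hchain y hy => ⟨sSup s,
      (hchain.directedOn.disjoint_sSup_right (a := a)).mpr fun _ hz => hs hz,
      fun _ hz => le_sSup hz⟩) b hab
  refine ⟨c, hbc, hac, fun x hx => hx.eq_bot_of_ge ?_⟩
  have hcx : c ⊔ x ≤ c := hmax (hac.disjoint_sup_right_of_disjoint_sup_left hx) le_sup_left
  exact (le_sup_right.trans hcx).trans le_sup_right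

namespace IsEssentialSubmodule

theorem iff_forall_disjoint {N : Submodule R M} :
    IsEssentialSubmodule N ↔ ∀ B, Disjoint N B → B = ⊥ := by
  simp only [IsEssentialSubmodule, disjoint_iff]
  exact forall_congr' fun _ => not_imp_not

theorem mono_s6 {E F : Submodule R M} (hE : IsEssentialSubmodule E) (hEF : E ≤ F) :
    IsEssentialSubmodule F :=
  iff_forall_disjoint.mpr fun B hB => iff_forall_disjoint.mp hE B (hB.mono_left hEF)

theorem top : IsEssentialSubmodule (⊤ : Submodule R M) :=
  iff_forall_disjoint.mpr fun _ hB => disjoint_top.mp hB.symm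

end IsEssentialSubmodule

theorem exists_disjoint_of_not_isEssentialSubmodule {N : Submodule R M}
    (hN : ¬ IsEssentialSubmodule N) : ∃ B ≠ ⊥, Disjoint N B := by
  simpa [IsEssentialSubmodule.iff_forall_disjoint, and_comm] using hN

theorem isVertexP_of_disjoint {A C : Submodule R M} (hA : A ≠ ⊥) (hC : C ≠ ⊥)
    (hAC : Disjoint A C) : IsVertexP C :=
  ⟨hC, fun h => hA (disjoint_top.mp (h ▸ hAC)),
    fun hess => hA (IsEssentialSubmodule.iff_forall_disjoint.mp hess A hAC.symm)⟩

theorem isVertexP_sup_of_not_isEssentialSubmodule {A K : Submodule R M} (hA : A ≠ ⊥)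
    (hAK : ¬ IsEssentialSubmodule (A ⊔ K)) : IsVertexP (A ⊔ K) :=
  ⟨fun h => hA (eq_bot_iff.mpr (h ▸ le_sup_left)),
    fun h => hAK (h ▸ IsEssentialSubmodule.top), hAK⟩

theorem exists_le_disjoint_isEssentialSubmodule_sup {A B : Submodule R M} (hAB : Disjoint A B) :
    ∃ C, B ≤ C ∧ Disjoint A C ∧ IsEssentialSubmodule (A ⊔ C) := by
  obtain ⟨C, hBC, hAC, hess⟩ := hAB.exists_le_disjoint_forall_disjoint_sup
  exact ⟨C, hBC, hAC, IsEssentialSubmodule.iff_forall_disjoint.mpr hess⟩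

theorem IsVertexP.exists_forall_adjP_of_le {A : Submodule R M} (hA : IsVertexP A) :
    ∃ C, ∀ P, IsVertexP P → A ≤ P → AdjP C P := by
  obtain ⟨B, hB, hAB⟩ := exists_disjoint_of_not_isEssentialSubmodule hA.2.2
  obtain ⟨C, hBC, hAC, hess⟩ := exists_le_disjoint_isEssentialSubmodule_sup hAB
  have hC : IsVertexP C :=
    isVertexP_of_disjoint hA.1 (fun h => hB (eq_bot_iff.mpr (h ▸ hBC))) hAC
  refine ⟨C, fun P hP hAP => ⟨hC, hP, ?_, hess.mono_s6 (sup_comm A C ▸ sup_le_sup_left hAP C)⟩⟩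
  rintro rfl
  exact hA.1 (hAC.eq_bot_of_le hAP)

theorem IsVertexP.exists_adjP_adjP_of_le {P K : Submodule R M} (hP : IsVertexP P)
    (hK : IsVertexP K) (hKP : K ≤ P) : ∃ D, AdjP P D ∧ AdjP D K := by
  obtain ⟨W, hW, hPW⟩ := exists_disjoint_of_not_isEssentialSubmodule hP.2.2
  obtain ⟨C, hWC, hPC, hessPC⟩ := exists_le_disjoint_isEssentialSubmodule_sup hPW
  obtain ⟨D, hCD, hKD, hessKD⟩ :=
    exists_le_disjoint_isEssentialSubmodule_sup (hPC.mono_left hKP)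
  have hD : IsVertexP D :=
    isVertexP_of_disjoint hK.1 (fun h => hW (eq_bot_iff.mpr (h ▸ hWC.trans hCD))) hKD
  refine ⟨D, ⟨hP, hD, ?_, hessPC.mono_s6 (sup_le_sup_left hCD P)⟩,
    ⟨hD, hK, (hKD.ne hK.1).symm, sup_comm K D ▸ hessKD⟩⟩
  rintro rfl
  exact hK.1 (hKD.eq_bot_of_le hKP)

/-- Every vertex of `N(M)` has finite degree iff `N(M)` has only
finitely many vertices. -/
theorem stmt6 :
    (∀ A : Submodule R M, IsVertexP A → {C | AdjP A C}.Finite) ↔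
      {N : Submodule R M | IsVertexP N}.Finite := by
  refine ⟨fun hdeg => ?_, fun hfin A _ => hfin.subset fun C hC => hC.2.1⟩
  have hadj (A : Submodule R M) : {C | AdjP A C}.Finite := by
    by_cases hA : IsVertexP A
    · exact hdeg A hA
    · exact Set.finite_empty.subset fun _ hC => hA hC.1
  rcases Set.eq_empty_or_nonempty {N : Submodule R M | IsVertexP N} with hV | ⟨A, hA⟩
  · exact hV ▸ Set.finite_empty
  obtain ⟨C, hC⟩ := hA.exists_forall_adjP_of_le
  have hball := Relation.finite_setOf_comp hadj (Relation.finite_setOf_comp hadj hadj) C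
  refine (((hadj A).union hball).insert A).subset fun K hK => ?_
  by_cases hKA : K = A
  · exact Or.inl hKA
  by_cases hess : IsEssentialSubmodule (A ⊔ K)
  · exact Or.inr (Or.inl ⟨hA, hK, Ne.symm hKA, hess⟩)
  have hP := isVertexP_sup_of_not_isEssentialSubmodule hA.1 hess
  obtain ⟨D, hPD, hDK⟩ := hP.exists_adjP_adjP_of_le hK le_sup_right
  exact Or.inr (Or.inr ⟨A ⊔ K, hC _ hP le_sup_left, D, hPD, hDK⟩)
end

section
/- If A and B are distinct submodules of M both of degree 1 in the proper sum-essential graph N(M) and A ∩ B ≠ 0, then A + B is also a vertex of N(M) of degree 1. -/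
/-!
Let `C` be maximal among the submodules meeting `A ⊓ B` trivially. Then `(A ⊓ B) + C` is
essential, so `C` is a neighbour, hence the only neighbour, of both `A` and `B`; and `B ⊄ C`.
If `A + B` were essential, `B` would be a neighbour of `A` other than `C`. If `Z` is a neighbour
of `A + B`, then `B + Z` is essential (otherwise it would be a neighbour of `A`, i.e. `C`), so
`Z` is a neighbour of `B`, i.e. `Z = C`.
-/

variable {R : Type*} [Ring R] {M : Type*} [AddCommGroup M] [Module R M]

namespace IsEssentialSubmodule

variable {N N' B : Submodule R M}

theorem eq_bot_of_disjoint (hN : IsEssentialSubmodule N) (h : Disjoint N B) : B = ⊥ :=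
  not_ne_iff.mp fun hB => hN B hB (disjoint_iff.mp h)

theorem mono_s15 (hN : IsEssentialSubmodule N) (h : N ≤ N') : IsEssentialSubmodule N' :=
  fun _ hB hN'B => hB (hN.eq_bot_of_disjoint (disjoint_iff.mpr hN'B |>.mono_left h))

end IsEssentialSubmodule

theorem not_isEssentialSubmodule_of_disjoint {N B : Submodule R M} (hB : B ≠ ⊥)
    (h : Disjoint N B) : ¬ IsEssentialSubmodule N :=
  fun hN => hB (hN.eq_bot_of_disjoint h)

theorem isVertexP_of_ne_bot {N : Submodule R M} (h0 : N ≠ ⊥) (hN : ¬ IsEssentialSubmodule N) :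
    IsVertexP N := by
  refine ⟨h0, ?_, hN⟩
  rintro rfl
  exact hN fun B hB => by simpa using hB

/-- A submodule maximal among those disjoint from `U` is an essential complement of `U`. -/
theorem exists_disjoint_isEssentialSubmodule_sup (U : Submodule R M) :
    ∃ C : Submodule R M, Disjoint U C ∧ IsEssentialSubmodule (U ⊔ C) := by
  obtain ⟨C, -, hCdisj, hCmax⟩ := zorn_le_nonempty₀ {C : Submodule R M | Disjoint U C}
    (fun c hc hchain _ _ => ⟨sSup c, (hchain.directedOn.disjoint_sSup_right).mpr hc,
      fun _ hz => le_sSup hz⟩) ⊥ disjoint_bot_right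
  refine ⟨C, hCdisj, fun D hD hUCD => hD ?_⟩
  have hUCD : Disjoint (U ⊔ C) D := disjoint_iff.mpr hUCD
  have hDC : D ≤ C :=
    le_sup_right.trans (hCmax (hCdisj.disjoint_sup_right_of_disjoint_sup_left hUCD) le_sup_left)
  exact hUCD.eq_bot_of_ge (hDC.trans le_sup_right)

theorem adjP_of_disjoint_of_isEssentialSubmodule_sup {A U C : Submodule R M} (hA : IsVertexP A)
    (hU : U ≠ ⊥) (hUA : U ≤ A) (hUC : Disjoint U C) (hess : IsEssentialSubmodule (U ⊔ C)) :
    AdjP A C := by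
  have hC : C ≠ ⊥ := by
    rintro rfl
    exact hA.2.2 (hess.mono_s15 (by simpa using hUA))
  refine ⟨hA, isVertexP_of_ne_bot hC (not_isEssentialSubmodule_of_disjoint hU hUC.symm), ?_,
    hess.mono_s15 (sup_le_sup_right hUA C)⟩
  rintro rfl
  exact hU (hUC.eq_bot_of_le hUA)

theorem IsVertexP.isEssentialSubmodule_or_eq_of_sup {A C W : Submodule R M} (hA : IsVertexP A)
    (hAC : ∀ W, AdjP A W → W = C) (hW : W ≠ ⊥) (hess : IsEssentialSubmodule (A ⊔ W)) :
    IsEssentialSubmodule W ∨ W = C := by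
  by_contra! h
  have hWA : A ≠ W := by
    rintro rfl
    exact hA.2.2 (by simpa using hess)
  exact h.2 (hAC W ⟨hA, isVertexP_of_ne_bot hW h.1, hWA, hess⟩)

theorem stmt15_general (A B : Submodule R M)
    (hA : ∃! C, AdjP A C) (hB : ∃! C, AdjP B C) (hint : A ⊓ B ≠ ⊥) :
    IsVertexP (A ⊔ B) ∧ ∃! C, AdjP (A ⊔ B) C := by
  obtain ⟨C, hdisj, hess⟩ := exists_disjoint_isEssentialSubmodule_sup (A ⊓ B)
  obtain ⟨-, hAv, -⟩ := hA.exists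
  obtain ⟨-, hBv, -⟩ := hB.exists
  have hAC : ∀ W, AdjP A W → W = C := fun W hW => hA.unique hW
    (adjP_of_disjoint_of_isEssentialSubmodule_sup hAv hint inf_le_left hdisj hess)
  have hBC : ∀ W, AdjP B W → W = C := fun W hW => hB.unique hW
    (adjP_of_disjoint_of_isEssentialSubmodule_sup hBv hint inf_le_right hdisj hess)
  have hB_not_le : ¬ B ≤ C := fun h => hint (hdisj.eq_bot_of_le (inf_le_right.trans h))
  have hABv : IsVertexP (A ⊔ B) := by
    refine isVertexP_of_ne_bot (fun h => hAv.1 (eq_bot_mono le_sup_left h)) fun hAB => ?_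
    rcases hAv.isEssentialSubmodule_or_eq_of_sup hAC hBv.1 hAB with hB | rfl
    exacts [hBv.2.2 hB, hB_not_le le_rfl]
  refine ⟨hABv, C, adjP_of_disjoint_of_isEssentialSubmodule_sup hABv hint
    (inf_le_left.trans le_sup_left) hdisj hess, ?_⟩
  rintro Z ⟨-, hZv, -, hZess⟩
  have hBZ : IsEssentialSubmodule (B ⊔ Z) := by
    rcases hAv.isEssentialSubmodule_or_eq_of_sup hAC (fun h => hBv.1 (eq_bot_mono le_sup_left h))
      (by simpa only [sup_assoc] using hZess) with h | h
    exacts [h, absurd (h ▸ le_sup_left) hB_not_le]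
  exact (hBv.isEssentialSubmodule_or_eq_of_sup hBC hZv.1 hBZ).resolve_left hZv.2.2

/-- If `A ≠ B` both have degree 1 in `N(M)` and `A ∩ B ≠ 0`, then
`A + B` is also a vertex of `N(M)` of degree 1. -/
theorem stmt15 (A B : Submodule R M) (hAB : A ≠ B)
    (hA : ∃! C, AdjP A C) (hB : ∃! C, AdjP B C) (hint : A ⊓ B ≠ ⊥) :
    IsVertexP (A ⊔ B) ∧ ∃! C, AdjP (A ⊔ B) C :=
  stmt15_general A B hA hB hint
end

section
/- If A is a universal vertex of the sum-essential graph S(M) (adjacent to every other vertex) and A is not essential in M, then A is a simple module. -/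
variable {R : Type*} [Ring R] {M : Type*} [AddCommGroup M] [Module R M]

theorem IsEssentialSubmodule.of_adjS_of_le {A B : Submodule R M} (hAB : AdjS A B) (hBA : B ≤ A) :
    IsEssentialSubmodule A := by
  simpa only [sup_eq_left.mpr hBA] using hAB.2.2.2

/-- A universal vertex of `S(M)` which is not essential in `M`
is a simple module. -/
theorem stmt16 (A : Submodule R M) (hA : IsVertexS A)
    (huniv : ∀ B : Submodule R M, IsVertexS B → B ≠ A → AdjS A B)
    (hne : ¬ IsEssentialSubmodule A) :
    IsAtom A :=
  ⟨hA.1, fun B hBA => by_contra fun hB =>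
    hne (.of_adjS_of_le (huniv B ⟨hB, ne_top_of_lt hBA⟩ hBA.ne) hBA.le)⟩
end

section
/- For submodules A and B of a left R-module M, the following are equivalent: (1) there are no nonzero isomorphic submodules X ⊆ A and Y ⊆ B (A and B are strongly disjoint); (2) for all nonzero a ∈ A and b ∈ B, the annihilators Ann(a) and Ann(b) are distinct; (3) A ∩ B = 0 and every nonzero submodule U of A + B satisfies U ∩ A ≠ 0 or U ∩ B ≠ 0. -/
variable {R : Type*} [Ring R] {M : Type*} [AddCommGroup M] [Module R M]

/-!
A cyclic module `R ∙ a` is `R ⧸ Ann(a)`, so nonzero isomorphic submodules of `A` and `B` exist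
exactly when some nonzero `a ∈ A`, `b ∈ B` share an annihilator: this is (1) ⇔ (2).
If `U ≤ A ⊔ B` meets neither `A` nor `B`, then for `a + b ∈ U`, `r • a = 0` forces
`r • (a + b) = r • b ∈ U ⊓ B = 0`, and symmetrically, so `Ann(a) = Ann(b)`; conversely, when `Ann(a) = Ann(b)` the diagonal `R ∙ (a + b)` meets neither summand.
This is (2) ⇔ (3).
-/

open Submodule Ideal

theorem Ideal.torsionOf_eq_torsionOf_iff {a b : M} :
    torsionOf R M a = torsionOf R M b ↔ {r : R | r • a = 0} = {r : R | r • b = 0} :=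
  SetLike.coe_set_eq.symm

theorem Submodule.nonempty_span_singleton_equiv_of_torsionOf_eq {a b : M}
    (h : torsionOf R M a = torsionOf R M b) : Nonempty ((R ∙ a) ≃ₗ[R] (R ∙ b)) :=
  ⟨(quotTorsionOfEquivSpanSingleton R M a).symm ≪≫ₗ quotEquivOfEq _ _ h ≪≫ₗ
    quotTorsionOfEquivSpanSingleton R M b⟩

theorem LinearEquiv.torsionOf_apply {N P : Submodule R M} (f : N ≃ₗ[R] P) (x : N) :
    torsionOf R M (f x : M) = torsionOf R M (x : M) := by
  ext r
  simp only [mem_torsionOf_iff, ← Submodule.coe_smul, ← map_smul, ZeroMemClass.coe_eq_zero,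
    LinearEquiv.map_eq_zero_iff]

namespace Submodule

theorem torsionOf_le_of_add_mem_of_disjoint {U B : Submodule R M} (hUB : Disjoint U B)
    {a b : M} (hab : a + b ∈ U) (hb : b ∈ B) : torsionOf R M a ≤ torsionOf R M b := by
  intro r hr
  rw [mem_torsionOf_iff] at hr ⊢
  have hrb : r • b = r • (a + b) := by rw [smul_add, hr, zero_add]
  exact disjoint_def.mp hUB _ (hrb ▸ U.smul_mem r hab) (B.smul_mem r hb)

theorem exists_torsionOf_eq_of_disjoint {U A B : Submodule R M} (hU : U ≤ A ⊔ B)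
    (hU0 : U ≠ ⊥) (hUA : Disjoint U A) (hUB : Disjoint U B) :
    ∃ a ∈ A, a ≠ 0 ∧ ∃ b ∈ B, b ≠ 0 ∧ torsionOf R M a = torsionOf R M b := by
  obtain ⟨u, hu, hu0⟩ := exists_mem_ne_zero_of_ne_bot hU0
  obtain ⟨a, ha, b, hb, rfl⟩ := mem_sup.mp (hU hu)
  refine ⟨a, ha, ?_, b, hb, ?_, le_antisymm (torsionOf_le_of_add_mem_of_disjoint hUB hu hb)
    (torsionOf_le_of_add_mem_of_disjoint hUA (add_comm a b ▸ hu) ha)⟩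
  · rintro rfl
    exact hu0 (disjoint_def.mp hUB _ hu (by simpa using hb))
  · rintro rfl
    exact hu0 (disjoint_def.mp hUA _ hu (by simpa using ha))

theorem disjoint_span_add_of_torsionOf_eq {A B : Submodule R M} (hAB : Disjoint A B)
    {a b : M} (ha : a ∈ A) (hb : b ∈ B) (h : torsionOf R M a = torsionOf R M b) :
    Disjoint (R ∙ (a + b)) A := by
  rw [disjoint_def]
  rintro _ hx hxA
  obtain ⟨r, rfl⟩ := mem_span_singleton.mp hx
  have hrbA : r • b ∈ A := by
    simpa only [smul_add, add_sub_cancel_left] using A.sub_mem hxA (A.smul_mem r ha)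
  have hrb : r • b = 0 := disjoint_def.mp hAB _ hrbA (B.smul_mem r hb)
  have hra : r • a = 0 := by rwa [← mem_torsionOf_iff, h]
  rw [smul_add, hra, hrb, add_zero]

end Submodule

/-- TFAE for submodules `A, B`: (1) `A` and `B` are strongly disjoint
(no nonzero isomorphic submodules `X ⊆ A`, `Y ⊆ B`); (2) any nonzero `a ∈ A` and
`b ∈ B` have distinct annihilators; (3) `A ∩ B = 0` and every nonzero submodule `U`
of `A + B` meets `A` or `B` nontrivially. -/
theorem stmt19 (A B : Submodule R M) :
    List.TFAE
      [¬ ∃ X Y : Submodule R M, X ≤ A ∧ Y ≤ B ∧ X ≠ ⊥ ∧ Y ≠ ⊥ ∧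
          Nonempty (↥X ≃ₗ[R] ↥Y),
       ∀ a ∈ A, a ≠ 0 → ∀ b ∈ B, b ≠ 0 →
          {r : R | r • a = 0} ≠ {r : R | r • b = 0},
       A ⊓ B = ⊥ ∧ ∀ U : Submodule R M, U ≤ A ⊔ B → U ≠ ⊥ →
          U ⊓ A ≠ ⊥ ∨ U ⊓ B ≠ ⊥] := by
  simp only [← torsionOf_eq_torsionOf_iff, ← disjoint_iff, Ne, ← not_and_or]
  tfae_have 1 → 2 := by
    intro h1 a ha ha0 b hb hb0 hab
    exact h1 ⟨R ∙ a, R ∙ b, span_singleton_le_iff_mem _ _ |>.mpr ha,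
      span_singleton_le_iff_mem _ _ |>.mpr hb, by simpa using ha0, by simpa using hb0,
      nonempty_span_singleton_equiv_of_torsionOf_eq hab⟩
  tfae_have 2 → 1 := by
    rintro h2 ⟨X, Y, hXA, hYB, hX0, -, ⟨f⟩⟩
    obtain ⟨x, hxX, hx0⟩ := exists_mem_ne_zero_of_ne_bot hX0
    exact h2 x (hXA hxX) hx0 (f ⟨x, hxX⟩) (hYB (f ⟨x, hxX⟩).2) (by simpa using hx0)
      (f.torsionOf_apply ⟨x, hxX⟩).symm
  tfae_have 2 → 3 := by
    intro h2
    refine ⟨disjoint_def.mpr fun x hxA hxB => by_contra fun hx0 => h2 x hxA hx0 x hxB hx0 rfl,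
      fun U hU hU0 ⟨hUA, hUB⟩ => ?_⟩
    obtain ⟨a, ha, ha0, b, hb, hb0, hab⟩ := exists_torsionOf_eq_of_disjoint hU hU0 hUA hUB
    exact h2 a ha ha0 b hb hb0 hab
  tfae_have 3 → 2 := by
    rintro ⟨hAB, h3⟩ a ha ha0 b hb hb0 hab
    refine h3 (R ∙ (a + b)) ((span_singleton_le_iff_mem _ _).mpr (add_mem_sup ha hb)) ?_
      ⟨disjoint_span_add_of_torsionOf_eq hAB ha hb hab, ?_⟩
    · rw [Submodule.span_singleton_eq_bot, add_eq_zero_iff_eq_neg]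
      exact fun hab0 => ha0 (disjoint_def.mp hAB _ ha (hab0 ▸ B.neg_mem hb))
    · simpa only [add_comm] using disjoint_span_add_of_torsionOf_eq hAB.symm hb ha hab.symm
  tfae_finish
end
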